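/- Let (A,B,C,E) be the CCF of a minimal encoder G of an (n,k,δ) convolutional code C. Then ker A ∩ ker C = {0}, and (ker A)C ∩ C_const = {0}, where (ker A)C = {XC : X ∈ ker A} and C_const = C ∩ F^n. -/

import Mathlib

open Polynomial Matrix
open scoped Classical

noncomputable section

namespace ConvCode

variable (F : Type) [Field F] [Fintype F]

/-- Hamming weight of a vector. -/
def wt {n : ℕ} (a : Fin n → F) : ℕ := (Finset.univ.filter fun j => a j ≠ 0).card

/-- Weight enumerator of a set of vectors in `F^n`, as a polynomial in `ℂ[W]`. -/
def weSet {n : ℕ} (S : Set (Fin n → F)) : Polynomial ℂ :=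
  ∑ a ∈ (Set.toFinite S).toFinset, (Polynomial.X : Polynomial ℂ) ^ wt F a

/-- The `i`-th row degree of a polynomial matrix. -/
def rowDeg {k n : ℕ} (G : Matrix (Fin k) (Fin n) (Polynomial F)) (i : Fin k) : ℕ :=
  Finset.univ.sup fun j => (G i j).natDegree

/-- `G` is basic: it has a polynomial right inverse. -/
def IsBasic {k n : ℕ} (G : Matrix (Fin k) (Fin n) (Polynomial F)) : Prop :=
  ∃ H : Matrix (Fin n) (Fin k) (Polynomial F), G * H = 1

/-- The degree of the code: maximal degree of the `k × k` minors of `G`. -/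
def codeDeg {k n : ℕ} (G : Matrix (Fin k) (Fin n) (Polynomial F)) : ℕ :=
  Finset.univ.sup fun f : Fin k ↪ Fin n => ((G.submatrix id f).det).natDegree

/-- A minimal (basic) encoder: the sum of the row degrees equals the degree of the code. -/
def IsMinimalEncoder {k n : ℕ} (G : Matrix (Fin k) (Fin n) (Polynomial F)) : Prop :=
  IsBasic F G ∧ ∑ i, rowDeg F G i = codeDeg F G

/-- The convolutional code generated by the encoder `G`. -/
def code {k n : ℕ} (G : Matrix (Fin k) (Fin n) (Polynomial F)) : Set (Fin n → Polynomial F) :=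
  Set.range fun u : Fin k → Polynomial F => u ᵥ* G

/-- The (module-theoretic) dual of a convolutional code. -/
def dualCode {n : ℕ} (𝓒 : Set (Fin n → Polynomial F)) : Set (Fin n → Polynomial F) :=
  {w | ∀ v ∈ 𝓒, w ⬝ᵥ v = 0}

/-- The sequence-space pairing `⟨⟨v,w⟩⟩ = ∑_t v_t w_tᵀ`. -/
def seqPair {n : ℕ} (v w : Fin n → Polynomial F) : F :=
  ∑ j, ∑ t ∈ Finset.range ((v j).natDegree + 1), (v j).coeff t * (w j).coeff t

/-- The sequence space dual of a convolutional code. -/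
def seqDual {n : ℕ} (𝓒 : Set (Fin n → Polynomial F)) : Set (Fin n → Polynomial F) :=
  {w | ∀ v ∈ 𝓒, ∀ l : ℕ, seqPair F v (fun j => Polynomial.X ^ l * w j) = 0}

/-- Index set of the state space of the controller canonical form:
a state index is a pair `(i, ν)` with `i` a row index and `ν < δ_i`. -/
abbrev StateIdx (k : ℕ) (d : Fin k → ℕ) : Type := (i : Fin k) × Fin (d i)

/-- The state-transition matrix `A` of the controller canonical form. -/
def ccfA {k : ℕ} (d : Fin k → ℕ) : Matrix (StateIdx k d) (StateIdx k d) F :=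
  Matrix.of fun s t => if s.1 = t.1 ∧ (s.2 : ℕ) + 1 = (t.2 : ℕ) then 1 else 0

/-- The input-to-state matrix `B` of the controller canonical form. -/
def ccfB {k : ℕ} (d : Fin k → ℕ) : Matrix (Fin k) (StateIdx k d) F :=
  Matrix.of fun i t => if t.1 = i ∧ (t.2 : ℕ) = 0 then 1 else 0

/-- The state-to-output matrix `C` of the controller canonical form. -/
def ccfC {k n : ℕ} (d : Fin k → ℕ) (G : Matrix (Fin k) (Fin n) (Polynomial F)) :
    Matrix (StateIdx k d) (Fin n) F :=
  Matrix.of fun s j => (G s.1 j).coeff ((s.2 : ℕ) + 1)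

/-- The matrix `E = G(0)` of the controller canonical form. -/
def ccfE {k n : ℕ} (G : Matrix (Fin k) (Fin n) (Polynomial F)) : Matrix (Fin k) (Fin n) F :=
  Matrix.of fun i j => (G i j).coeff 0

/-- The state index set of the controller canonical form of `G`. -/
abbrev States {k n : ℕ} (G : Matrix (Fin k) (Fin n) (Polynomial F)) : Type :=
  StateIdx k (rowDeg F G)

def matA {k n : ℕ} (G : Matrix (Fin k) (Fin n) (Polynomial F)) :
    Matrix (States F G) (States F G) F := ccfA F (rowDeg F G)

def matB {k n : ℕ} (G : Matrix (Fin k) (Fin n) (Polynomial F)) :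
    Matrix (Fin k) (States F G) F := ccfB F (rowDeg F G)

def matC {k n : ℕ} (G : Matrix (Fin k) (Fin n) (Polynomial F)) :
    Matrix (States F G) (Fin n) F := ccfC F (rowDeg F G) G

def matE {k n : ℕ} (G : Matrix (Fin k) (Fin n) (Polynomial F)) :
    Matrix (Fin k) (Fin n) F := ccfE F G

/-- The weight adjacency matrix of a state space realization `(A,B,C,E)`. -/
def WAM {σ : Type} [Fintype σ] {k n : ℕ} (A : Matrix σ σ F) (B : Matrix (Fin k) σ F)
    (C : Matrix σ (Fin n) F) (E : Matrix (Fin k) (Fin n) F) :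
    Matrix (σ → F) (σ → F) (Polynomial ℂ) :=
  Matrix.of fun X Y =>
    weSet F {v | ∃ u : Fin k → F, Y = X ᵥ* A + u ᵥ* B ∧ v = X ᵥ* C + u ᵥ* E}

/-- The weight adjacency matrix of an encoder `G` (via its controller canonical form). -/
def wam {k n : ℕ} (G : Matrix (Fin k) (Fin n) (Polynomial F)) :
    Matrix (States F G → F) (States F G → F) (Polynomial ℂ) :=
  WAM F (matA F G) (matB F G) (matC F G) (matE F G)

/-- The block code `C_const = 𝓒 ∩ F^n` of constant codewords. -/
def constSet {k n : ℕ} (G : Matrix (Fin k) (Fin n) (Polynomial F)) : Set (Fin n → F) :=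
  {w | (fun j => Polynomial.C (w j)) ∈ code F G}

/-- The block code `C_coeff` of coefficient vectors of codewords. -/
def coeffSet {k n : ℕ} (G : Matrix (Fin k) (Fin n) (Polynomial F)) : Set (Fin n → F) :=
  {w | ∃ v ∈ code F G, ∃ t : ℕ, ∀ j, (v j).coeff t = w j}

/-- The dual of a block code. -/
def blockDual {n : ℕ} (S : Set (Fin n → F)) : Set (Fin n → F) :=
  {w | ∀ v ∈ S, w ⬝ᵥ v = 0}

/-- `Δ`: the set of state pairs `(X,Y)` admitting a transition `Y = XA + uB`. -/
def Delta {k n : ℕ} (G : Matrix (Fin k) (Fin n) (Polynomial F)) :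
    Set ((States F G → F) × (States F G → F)) :=
  {p | ∃ u : Fin k → F, p.2 = p.1 ᵥ* matA F G + u ᵥ* matB F G}

/-- `Δ⁻ = {(0,Y) : Y ∈ im A}`. -/
def DeltaMinus {k n : ℕ} (G : Matrix (Fin k) (Fin n) (Polynomial F)) :
    Set ((States F G → F) × (States F G → F)) :=
  {p | p.1 = 0 ∧ ∃ X : States F G → F, p.2 = X ᵥ* matA F G}

/-- `Ω = {(X,Y) ∈ Δ : XC + Y Bᵀ E ∈ C_const}`. -/
def Omega {k n : ℕ} (G : Matrix (Fin k) (Fin n) (Polynomial F)) :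
    Set ((States F G → F) × (States F G → F)) :=
  {p | p ∈ Delta F G ∧
    p.1 ᵥ* matC F G + (p.2 ᵥ* (matB F G)ᵀ) ᵥ* matE F G ∈ constSet F G}

/-- Orthogonal of a set of state pairs with respect to the standard bilinear form on `F^{2δ}`. -/
def pairPerp {σ : Type} [Fintype σ] (S : Set ((σ → F) × (σ → F))) :
    Set ((σ → F) × (σ → F)) :=
  {p | ∀ s ∈ S, p.1 ⬝ᵥ s.1 + p.2 ⬝ᵥ s.2 = 0}

/-- `S_0 = Bᵀ E` and `S_i = Bᵀ B A^{i-1} C` for `i ≥ 1`. -/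
def Smat {k n : ℕ} (d : Fin k → ℕ) (G : Matrix (Fin k) (Fin n) (Polynomial F)) :
    ℕ → Matrix (StateIdx k d) (Fin n) F
  | 0 => (ccfB F d)ᵀ * ccfE F G
  | (i + 1) => (ccfB F d)ᵀ * ccfB F d * ccfA F d ^ i * ccfC F d G

def Sm {k n : ℕ} (G : Matrix (Fin k) (Fin n) (Polynomial F)) :
    ℕ → Matrix (States F G) (Fin n) F := Smat F (rowDeg F G) G

/-- The matrix `N = ∑_{m≥2} ∑_{i=1}^{m-1} ∑_{j=0}^{i-1} (Âᵀ)^{i-1} Ŝ_j S_{m-j}ᵀ A^{m-(i+1)}`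
(all summands with `m ≥ δ + δ̂` vanish, so the sum is truncated there). -/
def Nm {k kb n : ℕ} (G : Matrix (Fin k) (Fin n) (Polynomial F))
    (Gh : Matrix (Fin kb) (Fin n) (Polynomial F)) :
    Matrix (States F Gh) (States F G) F :=
  ∑ m ∈ Finset.Icc 2 (Fintype.card (States F G) + Fintype.card (States F Gh)),
    ∑ i ∈ Finset.Icc 1 (m - 1), ∑ j ∈ Finset.range i,
      (matA F Gh)ᵀ ^ (i - 1) * Sm F Gh j * (Sm F G (m - j))ᵀ * matA F G ^ (m - (i + 1))

/-- The reciprocal matrix `G' = diag(D^{δ_1},…,D^{δ_k}) · G(D⁻¹)`. -/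
def recip {k n : ℕ} (G : Matrix (Fin k) (Fin n) (Polynomial F)) :
    Matrix (Fin k) (Fin n) (Polynomial F) :=
  Matrix.of fun i j => (G i j).reflect (rowDeg F G i)

/-- The block diagonal matrix `R` whose blocks are the anti-identity matrices. -/
def Rmat {k : ℕ} (d : Fin k → ℕ) : Matrix (StateIdx k d) (StateIdx k d) F :=
  Matrix.of fun s t => if s.1 = t.1 ∧ (s.2 : ℕ) + (t.2 : ℕ) + 1 = d s.1 then 1 else 0

/-- The MacWilliams matrix `𝓗 = q^{-δ/2} (ζ^{τ(X Yᵀ)})_{X,Y}`. -/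
def macH (σ : Type) [Fintype σ] (p : ℕ) [Algebra (ZMod p) F] (ζ : ℂ) :
    Matrix (σ → F) (σ → F) ℂ :=
  Matrix.of fun X Y =>
    (((Real.sqrt (Fintype.card F) : ℝ) : ℂ))⁻¹ ^ Fintype.card σ *
      ζ ^ (Algebra.trace (ZMod p) F (X ⬝ᵥ Y)).val

/-- The MacWilliams transform `H(f)(W) = (1+(q-1)W)^n f((1-W)/(1+(q-1)W))`
on polynomials of degree at most `n`. -/
def macWT (q n : ℕ) (f : Polynomial ℂ) : Polynomial ℂ :=
  ∑ j ∈ Finset.range (n + 1),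
    Polynomial.C (f.coeff j) * (1 - Polynomial.X) ^ j *
      (1 + Polynomial.C ((q : ℂ) - 1) * Polynomial.X) ^ (n - j)

end ConvCode

/-!
A state `X ∈ ker A` is supported on the positions `(i, δ_i - 1)`, and there `X C = c [G]_hr`,
where `c` lists those entries and `[G]_hr` is the leading row coefficient matrix. Minimality makes
the rows of `[G]_hr` independent: a `k × k` minor of `G` of degree `δ = ∑ δ_i` has the
corresponding minor of `[G]_hr` as its top coefficient (and if `δ = 0`, then `[G]_hr = G(0)` is
right invertible because `G` is basic). Hence `X C = 0` forces `X = 0`. If `X C = u G` is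
constant, the predictable degree property gives `u_i = 0` unless `δ_i = 0`, so also
`X C = u(0) [G]_hr`; as `c` and `u(0)` have disjoint supports, independence gives `c = 0`.
-/
theorem Polynomial.coeff_prod_sum_of_natDegree_le {R ι : Type*} [CommSemiring R] (s : Finset ι)
    (f : ι → R[X]) (d : ι → ℕ) (h : ∀ i ∈ s, (f i).natDegree ≤ d i) :
    (∏ i ∈ s, f i).coeff (∑ i ∈ s, d i) = ∏ i ∈ s, (f i).coeff (d i) := by
  induction s using Finset.cons_induction with
  | empty => simp
  | cons a s ha ih =>
    have hs : ∀ i ∈ s, (f i).natDegree ≤ d i := fun i hi => h i (Finset.mem_cons_of_mem hi)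
    have hprod : (∏ i ∈ s, f i).natDegree ≤ ∑ i ∈ s, d i :=
      (natDegree_prod_le s f).trans (Finset.sum_le_sum hs)
    rw [Finset.prod_cons, Finset.sum_cons, Finset.prod_cons,
      coeff_mul_add_eq_of_natDegree_le (h a (Finset.mem_cons_self a s)) hprod, ih hs]

theorem Matrix.coeff_det_sum_of_natDegree_le {R m : Type*} [CommRing R] [Fintype m] [DecidableEq m]
    (M : Matrix m m R[X]) (d : m → ℕ) (h : ∀ i j, (M i j).natDegree ≤ d i) :
    M.det.coeff (∑ i, d i) = (Matrix.of fun i j => (M i j).coeff (d i)).det := by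
  simp only [Matrix.det_apply, finsetSum_coeff]
  refine Finset.sum_congr rfl fun σ _ => ?_
  rw [← Equiv.sum_comp σ d, Units.smul_def, Units.smul_def, coeff_smul,
    Polynomial.coeff_prod_sum_of_natDegree_le _ _ _ fun i _ => h (σ i) i]
  rfl

namespace ConvCode

section StateSpace

variable {F : Type} [Field F] {k : ℕ} {d : Fin k → ℕ}

theorem vecMul_ccfA_apply_succ (X : StateIdx k d → F) (i : Fin k) (ν : ℕ) (hν : ν + 1 < d i) :
    (X ᵥ* ccfA F d) ⟨i, ⟨ν + 1, hν⟩⟩ = X ⟨i, ⟨ν, by omega⟩⟩ := by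
  simp only [Matrix.vecMul, dotProduct, ccfA, Matrix.of_apply, mul_ite, mul_one, mul_zero]
  rw [Finset.sum_ite, Finset.sum_const_zero, add_zero,
    Finset.sum_eq_single_of_mem ⟨i, ⟨ν, by omega⟩⟩]
  · simp
  · rintro ⟨i', ν'⟩ hs hne
    obtain ⟨rfl, hν'⟩ := (Finset.mem_filter.1 hs).2
    exact (hne (Sigma.ext rfl (heq_of_eq (Fin.ext (Nat.add_right_cancel hν'))))).elim

theorem apply_eq_zero_of_vecMul_ccfA_eq_zero {X : StateIdx k d → F} (hX : X ᵥ* ccfA F d = 0)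
    {s : StateIdx k d} (hs : (s.2 : ℕ) + 1 ≠ d s.1) : X s = 0 := by
  obtain ⟨i, ν, hν⟩ := s
  rw [← vecMul_ccfA_apply_succ X i ν (by simp only at hs; omega), hX, Pi.zero_apply]

/-- The entries `X_(i, δ_i - 1)` (read as `0` if `δ_i = 0`), the only ones surviving in `ker A`. -/
def topState (d : Fin k → ℕ) (X : StateIdx k d → F) : Fin k → F :=
  fun i => if h : 0 < d i then X ⟨i, ⟨d i - 1, by omega⟩⟩ else 0

theorem eq_zero_of_topState_eq_zero {X : StateIdx k d → F} (hX : X ᵥ* ccfA F d = 0)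
    (htop : topState d X = 0) : X = 0 := by
  ext ⟨i, ν, hν⟩
  by_cases hs : ν + 1 = d i
  · have := congrFun htop i
    simp only [topState, dif_pos (show 0 < d i by omega), Pi.zero_apply] at this
    simpa [show d i - 1 = ν by omega] using this
  · exact apply_eq_zero_of_vecMul_ccfA_eq_zero hX hs

theorem vecMul_ccfC_eq_topState_vecMul {n : ℕ} (G : Matrix (Fin k) (Fin n) F[X])
    {X : StateIdx k d → F} (hX : X ᵥ* ccfA F d = 0) :
    X ᵥ* ccfC F d G = topState d X ᵥ* Matrix.of fun i j => (G i j).coeff (d i) := by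
  ext j
  simp only [Matrix.vecMul, dotProduct, ccfC, Matrix.of_apply]
  rw [← Finset.univ_sigma_univ, Finset.sum_sigma]
  refine Finset.sum_congr rfl fun i _ => ?_
  by_cases hd : 0 < d i
  · rw [Finset.sum_eq_single ⟨d i - 1, by omega⟩, topState, dif_pos hd, Nat.sub_add_cancel hd]
    · rintro ν - hne
      rw [apply_eq_zero_of_vecMul_ccfA_eq_zero hX (s := ⟨i, ν⟩)
        fun h => hne (Fin.ext (by simp only at h ⊢; omega)), zero_mul]
    · simp
  · have : IsEmpty (Fin (d i)) := by rw [show d i = 0 by omega]; infer_instance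
    simp [topState, hd]

end StateSpace

section MinimalEncoder

variable {F : Type} [Field F] {k n : ℕ}

variable (F) in
/-- The leading row coefficient matrix `[G]_hr`. -/
def rowLeadingCoeff (G : Matrix (Fin k) (Fin n) F[X]) : Matrix (Fin k) (Fin n) F :=
  Matrix.of fun i j => (G i j).coeff (rowDeg F G i)

theorem vecMul_matC_eq_topState_vecMul {G : Matrix (Fin k) (Fin n) F[X]} {X : States F G → F}
    (hX : X ᵥ* matA F G = 0) :
    X ᵥ* matC F G = topState (rowDeg F G) X ᵥ* rowLeadingCoeff F G :=
  vecMul_ccfC_eq_topState_vecMul G hX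

theorem natDegree_le_rowDeg (G : Matrix (Fin k) (Fin n) F[X]) (i : Fin k) (j : Fin n) :
    (G i j).natDegree ≤ rowDeg F G i :=
  Finset.le_sup (f := fun j => (G i j).natDegree) (Finset.mem_univ j)

theorem exists_natDegree_det_submatrix_eq_codeDeg {G : Matrix (Fin k) (Fin n) F[X]}
    (hG : 0 < codeDeg F G) :
    ∃ f : Fin k ↪ Fin n, (G.submatrix id f).det.natDegree = codeDeg F G := by
  obtain he | hne := (Finset.univ : Finset (Fin k ↪ Fin n)).eq_empty_or_nonempty
  · simp [codeDeg, he] at hG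
  · obtain ⟨f, -, hf⟩ := Finset.exists_mem_eq_sup _ hne
      fun f : Fin k ↪ Fin n => (G.submatrix id f).det.natDegree
    exact ⟨f, hf.symm⟩

theorem eq_zero_of_vecMul_rowLeadingCoeff_eq_zero {G : Matrix (Fin k) (Fin n) F[X]}
    (hG : IsMinimalEncoder F G) {c : Fin k → F} (hc : c ᵥ* rowLeadingCoeff F G = 0) : c = 0 := by
  obtain ⟨⟨H, hGH⟩, hdeg⟩ := hG
  by_cases hδ : ∑ i, rowDeg F G i = 0
  · have hL : rowLeadingCoeff F G = G.map constantCoeff := by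
      ext i j
      simp [rowLeadingCoeff, (Finset.sum_eq_zero_iff.1 hδ) i (Finset.mem_univ i)]
    have hinv : rowLeadingCoeff F G * H.map constantCoeff = 1 := by
      rw [hL, ← Matrix.map_mul, hGH, Matrix.map_one _ (map_zero _) (map_one _)]
    rw [← Matrix.vecMul_one c, ← hinv, ← Matrix.vecMul_vecMul, hc, Matrix.zero_vecMul]
  · obtain ⟨f, hf⟩ := exists_natDegree_det_submatrix_eq_codeDeg (G := G) (by omega)
    have hdet : ((rowLeadingCoeff F G).submatrix id f).det ≠ 0 := by
      have hM : (G.submatrix id f).det ≠ 0 := fun h => hδ (by rw [hdeg, ← hf, h, natDegree_zero])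
      have := coeff_det_sum_of_natDegree_le (G.submatrix id f) (rowDeg F G)
        fun i j => natDegree_le_rowDeg G i (f j)
      rw [hdeg, ← hf, coeff_natDegree] at this
      exact this ▸ leadingCoeff_ne_zero.2 hM
    exact Matrix.eq_zero_of_vecMul_eq_zero hdet (by ext j; exact congrFun hc (f j))

theorem coeff_vecMul_eq_vecMul_rowLeadingCoeff (G : Matrix (Fin k) (Fin n) F[X])
    (u : Fin k → F[X]) {N : ℕ} (hu : ∀ i, u i ≠ 0 → (u i).natDegree + rowDeg F G i ≤ N)
    (j : Fin n) :
    ((u ᵥ* G) j).coeff N =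
      ((fun i => (u i).coeff (N - rowDeg F G i)) ᵥ* rowLeadingCoeff F G) j := by
  simp only [Matrix.vecMul, dotProduct, finsetSum_coeff]
  refine Finset.sum_congr rfl fun i _ => ?_
  by_cases hui : u i = 0
  · simp [hui]
  · obtain ⟨e, rfl⟩ : ∃ e, N = e + rowDeg F G i := ⟨N - rowDeg F G i, by grind⟩
    rw [Nat.add_sub_cancel,
      coeff_mul_add_eq_of_natDegree_le (by grind) (natDegree_le_rowDeg G i j)]
    rfl

/-- The predictable degree property, in the direction `≤`. -/
theorem natDegree_add_rowDeg_le {G : Matrix (Fin k) (Fin n) F[X]} (hG : IsMinimalEncoder F G)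
    {u : Fin k → F[X]} {M : ℕ} (hM : ∀ j, ((u ᵥ* G) j).natDegree ≤ M) {i : Fin k}
    (hi : u i ≠ 0) : (u i).natDegree + rowDeg F G i ≤ M := by
  by_contra! hlt
  obtain ⟨i₁, hi₁, hmax⟩ := Finset.exists_max_image (Finset.univ.filter (u · ≠ 0))
    (fun i => (u i).natDegree + rowDeg F G i) ⟨i, by simpa using hi⟩
  set N := (u i₁).natDegree + rowDeg F G i₁
  have hle : ∀ i, u i ≠ 0 → (u i).natDegree + rowDeg F G i ≤ N :=
    fun i hi => hmax i (by simpa using hi)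
  have hb : (fun i => (u i).coeff (N - rowDeg F G i)) ᵥ* rowLeadingCoeff F G = 0 := by
    ext j
    rw [← coeff_vecMul_eq_vecMul_rowLeadingCoeff G u hle]
    exact coeff_eq_zero_of_natDegree_lt ((hM j).trans_lt (hlt.trans_le (hle i hi)))
  have := congrFun (eq_zero_of_vecMul_rowLeadingCoeff_eq_zero hG hb) i₁
  simp only [N, Nat.add_sub_cancel, coeff_natDegree, Pi.zero_apply, leadingCoeff_eq_zero] at this
  exact (Finset.mem_filter.1 hi₁).2 this

theorem eq_zero_of_vecMul_matA_eq_zero_of_vecMul_matC_eq_zero {G : Matrix (Fin k) (Fin n) F[X]}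
    (hG : IsMinimalEncoder F G) {X : States F G → F} (hA : X ᵥ* matA F G = 0)
    (hC : X ᵥ* matC F G = 0) : X = 0 :=
  eq_zero_of_topState_eq_zero hA <| eq_zero_of_vecMul_rowLeadingCoeff_eq_zero hG <|
    (vecMul_matC_eq_topState_vecMul hA).symm.trans hC

theorem vecMul_matC_eq_zero_of_mem_constSet {G : Matrix (Fin k) (Fin n) F[X]}
    (hG : IsMinimalEncoder F G) {X : States F G → F} (hA : X ᵥ* matA F G = 0)
    (hconst : X ᵥ* matC F G ∈ constSet F G) : X ᵥ* matC F G = 0 := by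
  obtain ⟨u, hu⟩ := hconst
  replace hu : u ᵥ* G = fun j => C ((X ᵥ* matC F G) j) := hu
  have hdeg : ∀ i, u i ≠ 0 → (u i).natDegree + rowDeg F G i ≤ 0 := fun i =>
    natDegree_add_rowDeg_le hG fun j => by rw [hu]; exact (natDegree_C _).le
  have hw : X ᵥ* matC F G = (fun i => (u i).coeff 0) ᵥ* rowLeadingCoeff F G := by
    ext j
    simpa [hu] using coeff_vecMul_eq_vecMul_rowLeadingCoeff G u hdeg j
  have htop : topState _ X = fun i => (u i).coeff 0 :=
    sub_eq_zero.1 <| eq_zero_of_vecMul_rowLeadingCoeff_eq_zero hG <| by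
      rw [sub_vecMul, ← hw, vecMul_matC_eq_topState_vecMul hA, sub_self]
  -- `u(0)` is supported where `δ_i = 0` and `topState X` where `δ_i > 0`
  have htop0 : topState _ X = 0 := by
    ext i
    by_cases hd : rowDeg F G i = 0
    · simp [topState, hd]
    · by_cases hui : u i = 0
      · simp [htop, hui]
      · exact absurd (hdeg i hui) (by omega)
  rw [vecMul_matC_eq_topState_vecMul hA, htop0, zero_vecMul]

end MinimalEncoder

end ConvCode

theorem statement8_general {F : Type} [Field F]
    (k n : ℕ) (G : Matrix (Fin k) (Fin n) (Polynomial F))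
    (hG : ConvCode.IsMinimalEncoder F G) :
    {X : ConvCode.States F G → F |
        X ᵥ* ConvCode.matA F G = 0 ∧ X ᵥ* ConvCode.matC F G = 0} = {0} ∧
    {w : Fin n → F | ∃ X : ConvCode.States F G → F,
        X ᵥ* ConvCode.matA F G = 0 ∧ w = X ᵥ* ConvCode.matC F G} ∩
      ConvCode.constSet F G = {0} := by
  refine ⟨Set.eq_singleton_iff_unique_mem.2 ⟨⟨zero_vecMul _, zero_vecMul _⟩, ?_⟩,
    Set.eq_singleton_iff_unique_mem.2 ⟨⟨⟨0, zero_vecMul _, (zero_vecMul _).symm⟩, 0, ?_⟩, ?_⟩⟩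
  · rintro X ⟨hA, hC⟩
    exact ConvCode.eq_zero_of_vecMul_matA_eq_zero_of_vecMul_matC_eq_zero hG hA hC
  · ext j
    simp
  · rintro w ⟨⟨X, hA, rfl⟩, hconst⟩
    exact ConvCode.vecMul_matC_eq_zero_of_mem_constSet hG hA hconst

/-- Remark 4.1 (v),(vi): `ker A ∩ ker C = {0}` and `(ker A)C ∩ C_const = {0}`. -/
theorem statement8 {F : Type} [Field F] [Fintype F]
    (k n : ℕ) (G : Matrix (Fin k) (Fin n) (Polynomial F))
    (hG : ConvCode.IsMinimalEncoder F G) :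
    {X : ConvCode.States F G → F |
        X ᵥ* ConvCode.matA F G = 0 ∧ X ᵥ* ConvCode.matC F G = 0} = {0} ∧
    {w : Fin n → F | ∃ X : ConvCode.States F G → F,
        X ᵥ* ConvCode.matA F G = 0 ∧ w = X ᵥ* ConvCode.matC F G} ∩
      ConvCode.constSet F G = {0} :=
  statement8_general k n G hG
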